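/- arXiv:2503.23995 — 3 statements merged into one kernel-verified Lean document; each statement's English description precedes it below -/
import Mathlib

section
/- Let E ⊂ ℂ be a finite set, L ∈ ℕ, and ε > 0. Let c : ℂ × ℕ → ℂ be a family of complex coefficients such that c_{n,l} = 0 whenever n ∉ E + ℕ or l > L. Assume: (i) for every l ≤ L and every compact subset K of the real interval (0, ε), sup_{z ∈ K} ∑_{n ∈ E+ℕ} |c_{n,l} · z^n| < +∞ (in particular, for each z ∈ (0, ε) the family (c_{n,l} z^n)_{n ∈ E+ℕ} is absolutely summable); (ii) for every z ∈ (0, ε), ∑_{l=0}^{L} ∑_{n ∈ E+ℕ} c_{n,l} · z^n · (log z)^l = 0. Then c_{n,l} = 0 for all n ∈ ℂ and all l ∈ ℕ. -/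
open Filter Topology

/-- Recurrence: for a finite set of purely imaginary frequencies there is a sequence of
times tending to infinity along which all the characters tend to `1`. -/
lemma exists_freq_seq (s : Finset ℂ) (hre : ∀ n ∈ s, n.re = 0) :
    ∃ u : ℕ → ℝ, Tendsto u atTop atTop ∧
      ∀ n ∈ s, Tendsto (fun k => Complex.exp (n * ((u k : ℝ) : ℂ))) atTop (𝓝 1) := by
  classical
  set v : ℕ → (↥s → ℂ) := fun k i => Complex.exp ((i : ℂ) * (k : ℕ)) with hv
  have hnorm1 : ∀ k (i : ↥s), ‖v k i‖ = 1 := by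
    intro k i
    have : ((i : ℂ) * (k : ℕ)).re = 0 := by
      have := hre i i.2
      simp [Complex.mul_re, this]
    simp [hv, Complex.norm_exp, this]
  have hmem : ∀ k, v k ∈ Metric.closedBall (0 : ↥s → ℂ) 1 := by
    intro k
    rw [Metric.mem_closedBall, dist_zero_right]
    refine (pi_norm_le_iff_of_nonneg zero_le_one).2 fun i => le_of_eq (hnorm1 k i)
  obtain ⟨a, -, φ, hφ, hconv⟩ :=
    (isCompact_closedBall (0 : ↥s → ℂ) 1).tendsto_subseq hmem
  have hgap : ∀ k j : ℕ, φ k + j ≤ φ (k + j) := by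
    intro k j
    induction j with
    | zero => simp
    | succ j ih =>
      have h1 : φ (k + j) < φ (k + j + 1) := hφ (Nat.lt_succ_self _)
      show φ k + (j + 1) ≤ φ (k + j + 1)
      omega
  refine ⟨fun k => (φ (2 * k) : ℝ) - (φ k : ℝ), ?_, ?_⟩
  · apply tendsto_atTop_mono (fun k => ?_) tendsto_natCast_atTop_atTop
    have := hgap k k
    rw [← two_mul] at this
    have : (φ k : ℝ) + (k : ℝ) ≤ (φ (2 * k) : ℝ) := by exact_mod_cast this
    linarith
  · intro n hn
    set i : ↥s := ⟨n, hn⟩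
    have hcoord : Tendsto (fun k => v (φ k) i) atTop (𝓝 (a i)) :=
      (tendsto_pi_nhds.1 hconv) i
    have h2 : Tendsto (fun k => v (φ (2 * k)) i) atTop (𝓝 (a i)) :=
      hcoord.comp (tendsto_atTop_mono (f := fun k : ℕ => k) (fun k => Nat.le_mul_of_pos_left k two_pos) tendsto_id)
    have hai : a i ≠ 0 := by
      have hl : Tendsto (fun k => ‖v (φ k) i‖) atTop (𝓝 ‖a i‖) :=
        (continuous_norm.tendsto (a i)).comp hcoord
      have hc : Tendsto (fun k : ℕ => ‖v (φ k) i‖) atTop (𝓝 1) := by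
        simp only [hnorm1]; exact tendsto_const_nhds
      have : ‖a i‖ = 1 := tendsto_nhds_unique hl hc
      intro h; rw [h] at this; simp at this
    have hdiv : Tendsto (fun k => v (φ (2 * k)) i / v (φ k) i) atTop (𝓝 (a i / a i)) :=
      h2.div hcoord hai
    rw [div_self hai] at hdiv
    refine hdiv.congr fun k => ?_
    have hcast : (((φ (2 * k) : ℝ) - (φ k : ℝ) : ℝ) : ℂ)
        = ((φ (2 * k) : ℕ) : ℂ) - ((φ k : ℕ) : ℂ) := by push_cast; ring
    simp only [hv, hcast]
    rw [eq_comm, mul_sub, Complex.exp_sub]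

/-- characters of `ℝ` built from a complex number. -/
noncomputable def expChar (w : ℂ) : Multiplicative ℝ →* ℂ where
  toFun := fun x => Complex.exp (w * ((Multiplicative.toAdd x : ℝ) : ℂ))
  map_one' := by simp
  map_mul' := by
    intro x y
    show Complex.exp _ = _
    rw [← Complex.exp_add]
    congr 1
    rw [show (Multiplicative.toAdd (x * y) : ℝ)
      = Multiplicative.toAdd x + Multiplicative.toAdd y from rfl]
    push_cast
    ring

lemma expChar_inj {w w' : ℂ} (hw : w.re = 0) (hw' : w'.re = 0)
    (h : expChar w = expChar w') : w = w' := by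
  by_contra hne
  have hγ : w.im - w'.im ≠ 0 := by
    intro h0
    apply hne
    exact Complex.ext (by rw [hw, hw']) (by linarith [sub_eq_zero.1 h0])
  set γ := w.im - w'.im
  have hpt : ∀ t : ℝ, Complex.exp (w * t) = Complex.exp (w' * t) := by
    intro t
    have := DFunLike.congr_fun h (Multiplicative.ofAdd t)
    simpa [expChar] using this
  have h1 : Complex.exp ((w - w') * ((Real.pi / γ : ℝ) : ℂ)) = 1 := by
    rw [sub_mul, Complex.exp_sub, hpt, div_self (Complex.exp_ne_zero _)]
  have hww' : w - w' = (γ : ℂ) * Complex.I := by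
    apply Complex.ext <;> simp [hw, hw', γ]
  rw [hww'] at h1
  have hγC : (γ : ℂ) ≠ 0 := Complex.ofReal_ne_zero.2 hγ
  have harg : (γ : ℂ) * Complex.I * ((Real.pi / γ : ℝ) : ℂ) = (Real.pi : ℂ) * Complex.I := by
    rw [Complex.ofReal_div]
    field_simp
  rw [harg, Complex.exp_pi_mul_I] at h1
  norm_num at h1

/-- A (generalized) trigonometric polynomial tending to `0` at `+∞` has all
coefficients zero. -/
lemma trig_poly_zero (s : Finset ℂ) (a : ℂ → ℂ) (ν : ℂ → ℂ)
    (hre : ∀ n ∈ s, (ν n).re = 0) (hinj : Set.InjOn ν s)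
    (h0 : Tendsto (fun t : ℝ => ∑ n ∈ s, a n * Complex.exp (ν n * (t : ℂ)))
      atTop (𝓝 0)) :
    ∀ n ∈ s, a n = 0 := by
  classical
  -- Step A: the trigonometric polynomial vanishes identically.
  obtain ⟨u, hu, hrec⟩ := exists_freq_seq (s.image ν) (by
    intro m hm
    obtain ⟨n, hn, rfl⟩ := Finset.mem_image.1 hm
    exact hre n hn)
  have hid : ∀ t : ℝ, ∑ n ∈ s, a n * Complex.exp (ν n * (t : ℂ)) = 0 := by
    intro t
    have h1 : Tendsto (fun k => ∑ n ∈ s, a n * Complex.exp (ν n * ((t + u k : ℝ) : ℂ)))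
        atTop (𝓝 0) := h0.comp (tendsto_atTop_add_const_left _ t hu)
    have h2 : Tendsto (fun k => ∑ n ∈ s, a n * Complex.exp (ν n * ((t + u k : ℝ) : ℂ)))
        atTop (𝓝 (∑ n ∈ s, a n * Complex.exp (ν n * (t : ℂ)))) := by
      have hterm : ∀ n ∈ s, Tendsto (fun k : ℕ =>
          (a n * Complex.exp (ν n * (t : ℂ))) * Complex.exp (ν n * ((u k : ℝ) : ℂ)))
          atTop (𝓝 (a n * Complex.exp (ν n * (t : ℂ)))) := by
        intro n hn
        have := (tendsto_const_nhds (x := a n * Complex.exp (ν n * (t : ℂ)))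
          (f := atTop (α := ℕ))).mul (hrec (ν n) (Finset.mem_image_of_mem ν hn))
        simpa using this
      have := tendsto_finset_sum s hterm
      refine this.congr fun k => Finset.sum_congr rfl fun n hn => ?_
      rw [mul_assoc, ← Complex.exp_add]
      congr 2
      push_cast
      ring
    exact tendsto_nhds_unique h2 h1
  -- Step B: Dedekind's linear independence of characters.
  have hli : LinearIndependent ℂ (fun i : ↥s => ⇑(expChar (ν (i : ℂ)))) := by
    apply (linearIndependent_monoidHom (Multiplicative ℝ) ℂ).comp
    intro i j hij
    have := expChar_inj (hre _ i.2) (hre _ j.2) hij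
    exact Subtype.ext (hinj i.2 j.2 this)
  have hsum0 : (∑ i : ↥s, a (i : ℂ) • ⇑(expChar (ν (i : ℂ)))) = 0 := by
    funext x
    have := hid (Multiplicative.toAdd x)
    simp only [Finset.sum_apply, Pi.smul_apply, smul_eq_mul, Pi.zero_apply]
    rw [Finset.sum_coe_sort s (fun n => a n * (expChar (ν n)) x)]
    simpa [expChar] using this
  intro n hn
  exact Fintype.linearIndependent_iff.1 hli (fun i => a (i : ℂ))
    hsum0 ⟨n, hn⟩

/-- Uniqueness of coefficients of one-variable logarithmic power series
expansions converging absolutely-locally-uniformly to `0` on `(0, ε)`. -/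
theorem logarithmic_power_series_coefficients_unique
    (E : Finset ℂ) (L : ℕ) (ε : ℝ) (hε : 0 < ε)
    (c : ℂ → ℕ → ℂ)
    (hsupp : ∀ n l, c n l ≠ 0 → (∃ e ∈ E, ∃ m : ℕ, n = e + m) ∧ l ≤ L)
    (hsummable : ∀ l ≤ L, ∀ z ∈ Set.Ioo (0 : ℝ) ε,
      Summable fun n : ℂ => ‖c n l * (z : ℂ) ^ n‖)
    (hbdd : ∀ l ≤ L, ∀ K ⊆ Set.Ioo (0 : ℝ) ε, IsCompact K →
      ∃ M : ℝ, ∀ z ∈ K, (∑' n : ℂ, ‖c n l * (z : ℂ) ^ n‖) ≤ M)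
    (hzero : ∀ z ∈ Set.Ioo (0 : ℝ) ε,
      ∑ l ∈ Finset.range (L + 1),
        ∑' n : ℂ, c n l * (z : ℂ) ^ n * (Real.log z : ℂ) ^ l = 0) :
    ∀ n l, c n l = 0 := by
  classical
  by_contra hcon
  push_neg at hcon
  obtain ⟨n₀, l₀', hne₀⟩ := hcon
  -- finiteness of the support with bounded real part
  have hfin : ∀ B : ℝ, {n : ℂ | (∃ l, c n l ≠ 0) ∧ n.re ≤ B}.Finite := by
    intro B
    apply Set.Finite.subset (Set.Finite.biUnion E.finite_toSet
      (fun e _ => (Set.finite_Icc 0 (⌊B - e.re⌋₊)).image (fun m : ℕ => e + (m : ℂ))))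
    rintro n ⟨⟨l, hl⟩, hB⟩
    obtain ⟨⟨e, he, m, rfl⟩, -⟩ := hsupp _ _ hl
    refine Set.mem_biUnion he ⟨m, ?_, rfl⟩
    have hre : ((e + (m : ℂ)).re) = e.re + m := by simp
    rw [hre] at hB
    have hm : (m : ℝ) ≤ B - e.re := by linarith
    exact Set.mem_Icc.2 ⟨Nat.zero_le _, Nat.le_floor hm⟩
  -- the minimal real part r of exponents in the support
  obtain ⟨nmin, hnminA, hnmin⟩ := Set.exists_min_image _ Complex.re (hfin n₀.re)
    ⟨n₀, ⟨l₀', hne₀⟩, le_refl _⟩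
  set r := nmin.re with hr
  have hrmin : ∀ n : ℂ, (∃ l, c n l ≠ 0) → r ≤ n.re := by
    intro n hn
    by_cases h : n.re ≤ n₀.re
    · exact hnmin n ⟨hn, h⟩
    · exact le_trans (hnminA.2) (le_of_not_ge h)
  -- the finite set N of exponents with minimal real part
  have hNfin : {n : ℂ | (∃ l, c n l ≠ 0) ∧ n.re = r}.Finite :=
    (hfin n₀.re).subset (fun n hn => ⟨hn.1, by rw [hn.2]; exact hnminA.2⟩)
  set N : Finset ℂ := hNfin.toFinset with hN
  have hNmem : ∀ n : ℂ, n ∈ N ↔ (∃ l, c n l ≠ 0) ∧ n.re = r := by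
    intro n; rw [hN, Set.Finite.mem_toFinset]; rfl
  have hnminN : nmin ∈ N := (hNmem nmin).2 ⟨hnminA.1, rfl⟩
  -- the maximal power of log among minimal exponents
  set lset : Finset ℕ := (Finset.range (L + 1)).filter (fun l => ∃ n ∈ N, c n l ≠ 0)
    with hlsetdef
  have hlne : lset.Nonempty := by
    obtain ⟨l, hl⟩ := hnminA.1
    exact ⟨l, Finset.mem_filter.2 ⟨Finset.mem_range_succ_iff.2 (hsupp _ _ hl).2,
      ⟨nmin, hnminN, hl⟩⟩⟩
  set l₀ := lset.max' hlne with hl₀def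
  have hl₀L : l₀ ≤ L :=
    Finset.mem_range_succ_iff.1 (Finset.mem_filter.1 (lset.max'_mem hlne)).1
  obtain ⟨n₁, hn₁N, hn₁⟩ := (Finset.mem_filter.1 (lset.max'_mem hlne)).2
  have hmaxl : ∀ n ∈ N, ∀ l, c n l ≠ 0 → l ≤ l₀ := by
    intro n hn l hl
    exact lset.le_max' l (Finset.mem_filter.2
      ⟨Finset.mem_range_succ_iff.2 (hsupp _ _ hl).2, ⟨n, hn, hl⟩⟩)
  -- the gap δ
  set Dfin : Finset ℝ := insert (1 : ℝ)
    (((hfin (r + 1)).toFinset.filter (fun n => r < n.re)).image (fun n => n.re - r))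
    with hDdef
  have hDne : Dfin.Nonempty := ⟨1, Finset.mem_insert_self _ _⟩
  set δ := Dfin.min' hDne with hδdef
  have hδmem : δ ∈ Dfin := Dfin.min'_mem hDne
  have hδpos : 0 < δ := by
    rcases Finset.mem_insert.1 hδmem with h | h
    · rw [h]; norm_num
    · obtain ⟨n, hn, hval⟩ := Finset.mem_image.1 h
      have h2 := (Finset.mem_filter.1 hn).2
      rw [← hval]; linarith
  have hδ1 : δ ≤ 1 := Dfin.min'_le 1 (Finset.mem_insert_self _ _)
  have hgapδ : ∀ n : ℂ, (∃ l, c n l ≠ 0) → n.re ≠ r → r + δ ≤ n.re := by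
    intro n hn hnr
    have hlt : r < n.re := lt_of_le_of_ne (hrmin n hn) (Ne.symm hnr)
    by_cases h : n.re ≤ r + 1
    · have hmem : n.re - r ∈ Dfin := Finset.mem_insert_of_mem (Finset.mem_image_of_mem _
        (Finset.mem_filter.2 ⟨(hfin (r + 1)).mem_toFinset.2 ⟨hn, h⟩, hlt⟩))
      have := Dfin.min'_le _ hmem
      linarith
    · linarith
  -- analytic setup
  set t₁ : ℝ := max 1 (1 - Real.log ε) with ht₁def
  have ht₁1 : (1 : ℝ) ≤ t₁ := le_max_left _ _
  have hzmem : ∀ t : ℝ, t₁ ≤ t → Real.exp (-t) ∈ Set.Ioo (0 : ℝ) ε := by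
    intro t ht
    refine ⟨Real.exp_pos _, ?_⟩
    rw [← Real.exp_log hε]
    apply Real.exp_lt_exp.2
    have := le_trans (le_max_right 1 (1 - Real.log ε)) ht
    linarith
  have hpow : ∀ (t : ℝ) (n : ℂ),
      ((Real.exp (-t) : ℝ) : ℂ) ^ n = Complex.exp (-(t : ℂ) * n) := by
    intro t n
    rw [Complex.cpow_def_of_ne_zero (by exact_mod_cast (Real.exp_pos (-t)).ne')]
    congr 1
    rw [← Complex.ofReal_log (Real.exp_pos (-t)).le, Real.log_exp]
    push_cast; ring
  have hnormterm : ∀ (t : ℝ) (n : ℂ) (l : ℕ),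
      ‖c n l * ((Real.exp (-t) : ℝ) : ℂ) ^ n‖ = ‖c n l‖ * Real.exp (-(t * n.re)) := by
    intro t n l
    rw [norm_mul, hpow]
    congr 1
    rw [Complex.norm_exp]
    congr 1
    simp [Complex.mul_re]
  have hsumN : ∀ l, l ≤ L → ∀ t : ℝ, t₁ ≤ t →
      Summable (fun n : ℂ => c n l * ((Real.exp (-t) : ℝ) : ℂ) ^ n) := by
    intro l hl t ht
    exact (hsummable l hl _ (hzmem t ht)).of_norm
  -- the key identity
  have hkey : ∀ t : ℝ, t₁ ≤ t →
      (∑ n ∈ N, c n l₀ * Complex.exp (((r : ℂ) - n) * (t : ℂ)))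
      = -((∑ l ∈ (Finset.range (L + 1)).erase l₀,
            (∑ n ∈ N, c n l * Complex.exp (((r : ℂ) - n) * (t : ℂ)))
              * ((-(t : ℂ)) ^ l * ((-(t : ℂ)) ^ l₀)⁻¹))
        + ∑ l ∈ Finset.range (L + 1),
            Complex.exp ((r : ℂ) * (t : ℂ))
              * (∑' (n : {x : ℂ // x ∉ N}), c ↑n l * ((Real.exp (-t) : ℝ) : ℂ) ^ (↑n : ℂ))
              * ((-(t : ℂ)) ^ l * ((-(t : ℂ)) ^ l₀)⁻¹)) := by
    intro t ht
    have ht0 : (0 : ℝ) < t := lt_of_lt_of_le one_pos (le_trans ht₁1 ht)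
    have hw : (-(t : ℂ)) ≠ 0 := by
      simp only [ne_eq, neg_eq_zero, Complex.ofReal_eq_zero]
      exact ht0.ne'
    have H := hzero _ (hzmem t ht)
    rw [Real.log_exp] at H
    simp only [Complex.ofReal_neg] at H
    -- H : ∑ l ∈ range (L+1), ∑' n, c n l * ↑(exp (-t)) ^ n * (-↑t) ^ l = 0
    have H2 : ∑ l ∈ Finset.range (L + 1),
        ((∑ n ∈ N, c n l * ((Real.exp (-t) : ℝ) : ℂ) ^ n)
          + (∑' (n : {x : ℂ // x ∉ N}), c ↑n l * ((Real.exp (-t) : ℝ) : ℂ) ^ (↑n : ℂ)))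
          * (-(t : ℂ)) ^ l = 0 := by
      rw [← H]
      refine Finset.sum_congr rfl fun l hl => ?_
      rw [tsum_mul_right,
        Summable.sum_add_tsum_subtype_compl (hsumN l (Finset.mem_range_succ_iff.1 hl) t ht) N]
    have H3 := congrArg
      (fun x : ℂ => x * (Complex.exp ((r : ℂ) * (t : ℂ)) * ((-(t : ℂ)) ^ l₀)⁻¹)) H2
    simp only [zero_mul] at H3
    rw [Finset.sum_mul] at H3
    have H4 : ∑ l ∈ Finset.range (L + 1),
        ((∑ n ∈ N, c n l * Complex.exp (((r : ℂ) - n) * (t : ℂ)))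
            * ((-(t : ℂ)) ^ l * ((-(t : ℂ)) ^ l₀)⁻¹)
          + Complex.exp ((r : ℂ) * (t : ℂ))
            * (∑' (n : {x : ℂ // x ∉ N}), c ↑n l * ((Real.exp (-t) : ℝ) : ℂ) ^ (↑n : ℂ))
            * ((-(t : ℂ)) ^ l * ((-(t : ℂ)) ^ l₀)⁻¹)) = 0 := by
      rw [← H3]
      refine Finset.sum_congr rfl fun l hl => ?_
      have hSe : (∑ n ∈ N, c n l * ((Real.exp (-t) : ℝ) : ℂ) ^ n)
          * Complex.exp ((r : ℂ) * (t : ℂ))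
          = ∑ n ∈ N, c n l * Complex.exp (((r : ℂ) - n) * (t : ℂ)) := by
        rw [Finset.sum_mul]
        refine Finset.sum_congr rfl fun n hn => ?_
        rw [hpow, mul_assoc, ← Complex.exp_add]
        congr 2
        ring
      rw [← hSe]
      ring
    rw [Finset.sum_add_distrib] at H4
    rw [← Finset.add_sum_erase _ _ (Finset.mem_range_succ_iff.2 hl₀L)] at H4
    rw [mul_inv_cancel₀ (pow_ne_zero l₀ hw), mul_one] at H4
    linear_combination H4
  -- the limit of t^L * exp (-δ t)
  have hpolylim : Tendsto (fun t : ℝ => t ^ L * Real.exp (-(δ * t))) atTop (𝓝 0) := by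
    have h1 : Tendsto (fun t : ℝ => δ * t) atTop atTop :=
      tendsto_id.const_mul_atTop hδpos
    have h2 := (Real.tendsto_pow_mul_exp_neg_atTop_nhds_zero L).comp h1
    have h3 := h2.const_mul ((δ ^ L)⁻¹)
    rw [mul_zero] at h3
    refine h3.congr fun t => ?_
    show (δ ^ L)⁻¹ * ((δ * t) ^ L * Real.exp (-(δ * t))) = t ^ L * Real.exp (-(δ * t))
    rw [mul_pow, ← mul_assoc, ← mul_assoc, inv_mul_cancel₀ (pow_ne_zero L hδpos.ne'),
      one_mul]
  -- limits of the error terms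
  have hT1 : ∀ l ∈ (Finset.range (L + 1)).erase l₀,
      Tendsto (fun t : ℝ =>
        (∑ n ∈ N, c n l * Complex.exp (((r : ℂ) - n) * (t : ℂ)))
          * ((-(t : ℂ)) ^ l * ((-(t : ℂ)) ^ l₀)⁻¹)) atTop (𝓝 0) := by
    intro l hl
    obtain ⟨hlne', hlr⟩ := Finset.mem_erase.1 hl
    have hlL : l ≤ L := Finset.mem_range_succ_iff.1 hlr
    have : Tendsto (fun t : ℝ => ∑ n ∈ N, (c n l * Complex.exp (((r : ℂ) - n) * (t : ℂ)))
        * ((-(t : ℂ)) ^ l * ((-(t : ℂ)) ^ l₀)⁻¹)) atTop (𝓝 (∑ n ∈ N, (0:ℂ))) := by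
      refine tendsto_finset_sum N fun n hn => ?_
      by_cases hc : c n l = 0
      · simp [hc]
      · have hll₀ : l < l₀ := lt_of_le_of_ne (hmaxl n hn l hc) hlne'
        apply squeeze_zero_norm' (a := fun t : ℝ => ‖c n l‖ * t⁻¹)
        · filter_upwards [eventually_ge_atTop (1 : ℝ)] with t ht1
          have ht0 : (0 : ℝ) < t := lt_of_lt_of_le one_pos ht1
          have hexp1 : ‖Complex.exp (((r : ℂ) - n) * (t : ℂ))‖ = 1 := by
            rw [Complex.norm_exp]
            have : (((r : ℂ) - n) * (t : ℂ)).re = (r - n.re) * t := by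
              simp [Complex.mul_re]
            rw [this, ((hNmem n).1 hn).2]
            simp
          have hG : ‖(-(t : ℂ)) ^ l * ((-(t : ℂ)) ^ l₀)⁻¹‖ = t ^ l * (t ^ l₀)⁻¹ := by
            rw [norm_mul, norm_inv, norm_pow, norm_pow, norm_neg, Complex.norm_real,
              Real.norm_eq_abs, abs_of_pos ht0]
          rw [norm_mul, norm_mul, hexp1, mul_one, hG]
          have hb : t ^ l * (t ^ l₀)⁻¹ ≤ t⁻¹ := by
            have h1 : t ^ (l + 1) ≤ t ^ l₀ := pow_le_pow_right₀ ht1 hll₀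
            have h2 : t ^ l * (t ^ l₀)⁻¹ ≤ t ^ l * (t ^ (l + 1))⁻¹ := by
              have hi : (t ^ l₀)⁻¹ ≤ (t ^ (l + 1))⁻¹ :=
                (inv_le_inv₀ (pow_pos ht0 _) (pow_pos ht0 _)).2 h1
              exact mul_le_mul_of_nonneg_left hi (pow_nonneg ht0.le l)
            have h3 : t ^ l * (t ^ (l + 1))⁻¹ = t⁻¹ := by
              rw [pow_succ, mul_inv]
              rw [← mul_assoc, mul_inv_cancel₀ (pow_ne_zero l ht0.ne'), one_mul]
            linarith
          exact mul_le_mul_of_nonneg_left hb (norm_nonneg _)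
        · simpa using tendsto_inv_atTop_zero.const_mul ‖c n l‖
    rw [Finset.sum_const, smul_zero] at this
    refine this.congr fun t => ?_
    rw [← Finset.sum_mul]
  have hT2 : ∀ l ∈ Finset.range (L + 1),
      Tendsto (fun t : ℝ =>
        Complex.exp ((r : ℂ) * (t : ℂ))
          * (∑' (n : {x : ℂ // x ∉ N}), c ↑n l * ((Real.exp (-t) : ℝ) : ℂ) ^ (↑n : ℂ))
          * ((-(t : ℂ)) ^ l * ((-(t : ℂ)) ^ l₀)⁻¹)) atTop (𝓝 0) := by
    intro l hlr
    have hlL : l ≤ L := Finset.mem_range_succ_iff.1 hlr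
    set C : ℝ := ∑' (n : {x : ℂ // x ∉ N}), ‖c ↑n l * ((Real.exp (-t₁) : ℝ) : ℂ) ^ (↑n : ℂ)‖
      with hCdef
    have hsum₁ : Summable (fun n : {x : ℂ // x ∉ N} =>
        ‖c ↑n l * ((Real.exp (-t₁) : ℝ) : ℂ) ^ (↑n : ℂ)‖) :=
      (hsummable l hlL _ (hzmem t₁ le_rfl)).subtype _
    have hC0 : 0 ≤ C := tsum_nonneg fun n => norm_nonneg _
    apply squeeze_zero_norm' (a := fun t : ℝ =>
      (C * Real.exp (t₁ * (r + δ))) * (t ^ L * Real.exp (-(δ * t))))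
    · filter_upwards [eventually_ge_atTop t₁] with t ht
      have ht1 : (1 : ℝ) ≤ t := le_trans ht₁1 ht
      have ht0 : (0 : ℝ) < t := lt_of_lt_of_le one_pos ht1
      have hexpr : ‖Complex.exp ((r : ℂ) * (t : ℂ))‖ = Real.exp (r * t) := by
        rw [Complex.norm_exp]
        congr 1
        simp [Complex.mul_re]
      have hG : ‖(-(t : ℂ)) ^ l * ((-(t : ℂ)) ^ l₀)⁻¹‖ ≤ t ^ L := by
        rw [norm_mul, norm_inv, norm_pow, norm_pow, norm_neg, Complex.norm_real,
          Real.norm_eq_abs, abs_of_pos ht0]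
        have h1 : (t ^ l₀)⁻¹ ≤ 1 := by
          rw [inv_le_one_iff₀]
          right
          exact one_le_pow₀ ht1
        calc t ^ l * (t ^ l₀)⁻¹ ≤ t ^ l * 1 :=
              mul_le_mul_of_nonneg_left h1 (pow_nonneg ht0.le _)
          _ = t ^ l := mul_one _
          _ ≤ t ^ L := pow_le_pow_right₀ ht1 hlL
      have hR : ‖∑' (n : {x : ℂ // x ∉ N}), c ↑n l * ((Real.exp (-t) : ℝ) : ℂ) ^ (↑n : ℂ)‖
          ≤ C * Real.exp (-((t - t₁) * (r + δ))) := by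
        have hsn : Summable (fun n : {x : ℂ // x ∉ N} =>
            ‖c ↑n l * ((Real.exp (-t) : ℝ) : ℂ) ^ (↑n : ℂ)‖) :=
          (hsummable l hlL _ (hzmem t ht)).subtype _
        refine le_trans (norm_tsum_le_tsum_norm hsn) ?_
        rw [hCdef, ← tsum_mul_right]
        refine Summable.tsum_le_tsum (fun n => ?_) hsn (hsum₁.mul_right _)
        by_cases hc : c ↑n l = 0
        · simp [hc, Real.exp_nonneg]
        · have hnr : (↑n : ℂ).re ≠ r := by
            intro hre
            exact n.2 ((hNmem ↑n).2 ⟨⟨l, hc⟩, hre⟩)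
          have hge : r + δ ≤ (↑n : ℂ).re := hgapδ _ ⟨l, hc⟩ hnr
          rw [hnormterm, hnormterm, mul_assoc, ← Real.exp_add]
          refine mul_le_mul_of_nonneg_left (Real.exp_le_exp.2 ?_) (norm_nonneg _)
          nlinarith [sub_nonneg.2 ht]
      calc ‖Complex.exp ((r : ℂ) * (t : ℂ))
            * (∑' (n : {x : ℂ // x ∉ N}), c ↑n l * ((Real.exp (-t) : ℝ) : ℂ) ^ (↑n : ℂ))
            * ((-(t : ℂ)) ^ l * ((-(t : ℂ)) ^ l₀)⁻¹)‖
          = ‖Complex.exp ((r : ℂ) * (t : ℂ))‖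
            * ‖∑' (n : {x : ℂ // x ∉ N}), c ↑n l * ((Real.exp (-t) : ℝ) : ℂ) ^ (↑n : ℂ)‖
            * ‖(-(t : ℂ)) ^ l * ((-(t : ℂ)) ^ l₀)⁻¹‖ := by rw [norm_mul, norm_mul]
        _ ≤ Real.exp (r * t) * (C * Real.exp (-((t - t₁) * (r + δ)))) * t ^ L := by
            rw [hexpr]
            refine mul_le_mul (mul_le_mul_of_nonneg_left hR (Real.exp_nonneg _)) hG
              (norm_nonneg _) ?_
            positivity
        _ = (C * Real.exp (t₁ * (r + δ))) * (t ^ L * Real.exp (-(δ * t))) := by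
            rw [show Real.exp (r * t) * (C * Real.exp (-((t - t₁) * (r + δ)))) * t ^ L
              = C * t ^ L * (Real.exp (r * t) * Real.exp (-((t - t₁) * (r + δ)))) from by
                ring, ← Real.exp_add,
              show r * t + -((t - t₁) * (r + δ)) = t₁ * (r + δ) + -(δ * t) from by ring,
              Real.exp_add]
            ring
    · simpa using hpolylim.const_mul (C * Real.exp (t₁ * (r + δ)))
  -- the minimal block tends to zero
  have hΦ0 : Tendsto (fun t : ℝ =>
      ∑ n ∈ N, c n l₀ * Complex.exp (((r : ℂ) - n) * (t : ℂ))) atTop (𝓝 0) := by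
    have hA : Tendsto (fun t : ℝ => ∑ l ∈ (Finset.range (L + 1)).erase l₀,
        (∑ n ∈ N, c n l * Complex.exp (((r : ℂ) - n) * (t : ℂ)))
          * ((-(t : ℂ)) ^ l * ((-(t : ℂ)) ^ l₀)⁻¹)) atTop (𝓝 0) := by
      have := tendsto_finset_sum ((Finset.range (L + 1)).erase l₀) hT1
      simpa using this
    have hB : Tendsto (fun t : ℝ => ∑ l ∈ Finset.range (L + 1),
        Complex.exp ((r : ℂ) * (t : ℂ))
          * (∑' (n : {x : ℂ // x ∉ N}), c ↑n l * ((Real.exp (-t) : ℝ) : ℂ) ^ (↑n : ℂ))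
          * ((-(t : ℂ)) ^ l * ((-(t : ℂ)) ^ l₀)⁻¹)) atTop (𝓝 0) := by
      have := tendsto_finset_sum (Finset.range (L + 1)) hT2
      simpa using this
    have hlim : Tendsto (fun t : ℝ =>
        -((∑ l ∈ (Finset.range (L + 1)).erase l₀,
            (∑ n ∈ N, c n l * Complex.exp (((r : ℂ) - n) * (t : ℂ)))
              * ((-(t : ℂ)) ^ l * ((-(t : ℂ)) ^ l₀)⁻¹))
          + ∑ l ∈ Finset.range (L + 1),
            Complex.exp ((r : ℂ) * (t : ℂ))
              * (∑' (n : {x : ℂ // x ∉ N}), c ↑n l * ((Real.exp (-t) : ℝ) : ℂ) ^ (↑n : ℂ))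
              * ((-(t : ℂ)) ^ l * ((-(t : ℂ)) ^ l₀)⁻¹))) atTop (𝓝 0) := by
      have := (hA.add hB).neg
      simpa using this
    refine hlim.congr' ?_
    filter_upwards [eventually_ge_atTop t₁] with t ht
    exact (hkey t ht).symm
  -- conclude via linear independence of characters
  have hzero' : ∀ n ∈ N, c n l₀ = 0 := by
    refine trig_poly_zero N (fun n => c n l₀) (fun n => (r : ℂ) - n) ?_ ?_ ?_
    · intro n hn
      have := ((hNmem n).1 hn).2
      simp [Complex.sub_re, this]
    · intro x _ y _ h
      exact sub_right_injective h
    · exact hΦ0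
  exact hn₁ (hzero' n₁ hn₁N)
end

section
/- Let k ≥ 1, let s₁, …, s_k be pairwise distinct real numbers, and let c₁, …, c_k ∈ ℂ. Suppose that for every natural number j, the function t ↦ ∑_{i=1}^{k} c_i · s_i^j · e^{𝐢 s_i t} of the real variable t tends to 0 as t → −∞. Then c_i = 0 for every 1 ≤ i ≤ k. -/
open Matrix

/-- If all the moment combinations `∑ cᵢ sᵢʲ e^{𝐢 sᵢ t}` (for distinct real
frequencies `sᵢ`) tend to `0` as `t → −∞`, then all coefficients `cᵢ` vanish. -/
theorem coefficients_vanish_of_tendsto_zero_atBot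
    (k : ℕ) (hk : 1 ≤ k) (s : Fin k → ℝ) (hs : Function.Injective s)
    (c : Fin k → ℂ)
    (h : ∀ j : ℕ, Filter.Tendsto
      (fun t : ℝ => ∑ i : Fin k,
        c i * (s i : ℂ) ^ j * Complex.exp (Complex.I * (s i : ℂ) * (t : ℂ)))
      Filter.atBot (nhds 0)) :
    ∀ i, c i = 0 := by
  intro i
  set V : Matrix (Fin k) (Fin k) ℂ := Matrix.vandermonde (fun m => (s m : ℂ)) with hV
  have hdet : V.det ≠ 0 := by
    rw [hV, Matrix.det_vandermonde_ne_zero_iff]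
    exact fun a b hab => hs (Complex.ofReal_injective (by simpa using hab))
  have hdetT : Vᵀ.det ≠ 0 := by rwa [Matrix.det_transpose]
  set g : ℝ → Fin k → ℂ :=
    fun t m => c m * Complex.exp (Complex.I * (s m : ℂ) * (t : ℂ)) with hg
  have hmul : ∀ t, (Vᵀ)⁻¹ *ᵥ (Vᵀ *ᵥ g t) = g t := by
    intro t
    rw [Matrix.mulVec_mulVec, Matrix.nonsing_inv_mul _ (isUnit_iff_ne_zero.mpr hdetT), Matrix.one_mulVec]
  have hcomp : ∀ j : Fin k, Filter.Tendsto (fun t => (Vᵀ *ᵥ g t) j)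
      Filter.atBot (nhds 0) := by
    intro j
    have heq : (fun t => (Vᵀ *ᵥ g t) j) = (fun t : ℝ => ∑ m : Fin k,
        c m * (s m : ℂ) ^ (j : ℕ) * Complex.exp (Complex.I * (s m : ℂ) * (t : ℂ))) := by
      funext t
      simp only [Matrix.mulVec, Matrix.transpose_apply, dotProduct, hV,
        Matrix.vandermonde, Matrix.of_apply, hg]
      exact Finset.sum_congr rfl fun m _ => by ring
    rw [heq]
    exact h j
  have hgi : Filter.Tendsto (fun t => g t i) Filter.atBot (nhds 0) := by
    have heq : (fun t => g t i) = fun t => ∑ j, (Vᵀ)⁻¹ i j * (Vᵀ *ᵥ g t) j := by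
      funext t
      conv_lhs => rw [← hmul t]
      simp [Matrix.mulVec, dotProduct]
    rw [heq]
    have := tendsto_finset_sum (Finset.univ : Finset (Fin k))
      (fun j _ => (hcomp j).const_mul ((Vᵀ)⁻¹ i j))
    simpa using this
  have hnorm : ∀ t : ℝ, ‖g t i‖ = ‖c i‖ := by
    intro t
    rw [hg]
    simp only [norm_mul, Complex.norm_exp]
    have : (Complex.I * (s i : ℂ) * (t : ℂ)).re = 0 := by simp
    rw [this, Real.exp_zero, mul_one]
  have h1 : Filter.Tendsto (fun t => ‖g t i‖) Filter.atBot (nhds 0) := by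
    simpa using hgi.norm
  have h2 : Filter.Tendsto (fun t => ‖g t i‖) Filter.atBot (nhds ‖c i‖) := by
    simp only [hnorm]
    exact tendsto_const_nhds
  have := tendsto_nhds_unique h1 h2
  simpa using this.symm
end

section
/- Let δ > 0 and let h be a holomorphic function on the open disc D_δ = {z ∈ ℂ : |z| < δ}. Let γ ∈ ℂ and σ ∈ ℤ, and assume that either Re γ > 0, or Re γ = 0 and σ ≤ −1. Define F(t) = e^{γ t} · h(e^t) · t^σ for real t with t < min(log δ, 0), where t^σ is the integer power of the nonzero real number t. Then for every j ∈ ℕ, the j-th derivative F^{(j)}(t) tends to 0 as t → −∞. -/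
open Filter Topology Metric

private noncomputable def Term' (γ : ℂ) (g : ℂ → ℂ) (σ : ℤ) : ℝ → ℂ :=
  fun t => Complex.exp (γ * (t : ℂ)) * g ((Real.exp t : ℂ)) * (t : ℂ) ^ σ

private inductive Good' (δ : ℝ) : (ℝ → ℂ) → Prop
  | term (γ : ℂ) (g : ℂ → ℂ) (σ : ℤ)
      (hg : DifferentiableOn ℂ g (Metric.ball (0 : ℂ) δ))
      (hγ : 0 < γ.re ∨ (γ.re = 0 ∧ σ ≤ -1)) : Good' δ (Term' γ g σ)
  | add {f₁ f₂ : ℝ → ℂ} : Good' δ f₁ → Good' δ f₂ → Good' δ (fun t => f₁ t + f₂ t)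

private lemma aux_exp_zpow (a : ℝ) (σ : ℤ) (h : 0 < a ∨ (a = 0 ∧ σ ≤ -1)) :
    Tendsto (fun t : ℝ => Real.exp (a * t) * |t| ^ σ) atBot (nhds 0) := by
  rcases h with ha | ⟨ha, hσ⟩
  · rcases lt_or_ge σ 0 with hσ | hσ
    · have h1 : Tendsto (fun t : ℝ => Real.exp (a * t)) atBot (nhds 0) :=
        Real.tendsto_exp_atBot.comp (tendsto_const_mul_atBot_of_pos ha |>.mpr tendsto_id)
      have h2 : Tendsto (fun t : ℝ => |t| ^ σ) atBot (nhds 0) :=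
        (tendsto_zpow_atTop_zero hσ).comp tendsto_abs_atBot_atTop
      simpa using h1.mul h2
    · lift σ to ℕ using hσ with n
      have key : Tendsto (fun x : ℝ => (x ^ n * Real.exp (-x)) / a ^ n) atTop (nhds 0) := by
        simpa using (Real.tendsto_pow_mul_exp_neg_atTop_nhds_zero n).div_const (a ^ n)
      have h2 : Tendsto (fun t : ℝ => -(a * t)) atBot atTop := by
        have := (tendsto_const_mul_atBot_of_pos ha).mpr (tendsto_id (α := ℝ))
        exact tendsto_neg_atBot_atTop.comp this
      have h3 := key.comp h2
      refine h3.congr' ?_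
      filter_upwards [eventually_lt_atBot (0 : ℝ)] with t ht
      have habs : |t| = -t := abs_of_neg ht
      have hne : a ^ n ≠ 0 := pow_ne_zero _ (ne_of_gt ha)
      show ((-(a * t)) ^ n * Real.exp (-(-(a * t)))) / a ^ n = Real.exp (a * t) * |t| ^ (n : ℤ)
      rw [zpow_natCast, habs, neg_neg, show (-(a * t)) ^ n = a ^ n * (-t) ^ n by
        rw [← mul_pow]; ring_nf]
      field_simp
  · have h2 : Tendsto (fun t : ℝ => |t| ^ σ) atBot (nhds 0) :=
      (tendsto_zpow_atTop_zero (by omega : σ < 0)).comp tendsto_abs_atBot_atTop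
    simpa [ha] using h2

private lemma term_tendsto {δ : ℝ} (hδ : 0 < δ) {γ : ℂ} {g : ℂ → ℂ} {σ : ℤ}
    (hg : DifferentiableOn ℂ g (Metric.ball (0 : ℂ) δ))
    (hγ : 0 < γ.re ∨ (γ.re = 0 ∧ σ ≤ -1)) :
    Tendsto (Term' γ g σ) atBot (nhds 0) := by
  have h0 : (0 : ℂ) ∈ Metric.ball (0 : ℂ) δ := by simp [hδ]
  have hgc : ContinuousAt g 0 :=
    (hg.differentiableAt (Metric.isOpen_ball.mem_nhds h0)).continuousAt
  have hexp : Tendsto (fun t : ℝ => ((Real.exp t : ℝ) : ℂ)) atBot (nhds 0) := by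
    have := (Complex.continuous_ofReal.tendsto 0).comp Real.tendsto_exp_atBot
    simpa [Function.comp_def] using this
  have hgt : Tendsto (fun t : ℝ => g ((Real.exp t : ℂ))) atBot (nhds (g 0)) :=
    hgc.tendsto.comp hexp
  set C := ‖g 0‖ + 1 with hC
  have hCpos : 0 ≤ C := by positivity
  have hb : ∀ᶠ t : ℝ in atBot, ‖g ((Real.exp t : ℂ))‖ ≤ C :=
    (hgt.norm.eventually_lt_const (by simp [hC])).mono fun t ht => le_of_lt ht
  refine squeeze_zero_norm' ?_ (by simpa using (aux_exp_zpow γ.re σ hγ).const_mul C)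
  filter_upwards [hb] with t ht
  have hnorm : ‖Term' γ g σ t‖ =
      Real.exp (γ.re * t) * ‖g ((Real.exp t : ℂ))‖ * |t| ^ σ := by
    simp [Term', Complex.norm_exp, norm_zpow, Complex.mul_re, Complex.ofReal_re,
      Complex.ofReal_im, Complex.norm_real, mul_comm]
  rw [hnorm]
  have h1 : (0:ℝ) ≤ Real.exp (γ.re * t) * |t| ^ σ := by positivity
  calc Real.exp (γ.re * t) * ‖g ((Real.exp t : ℂ))‖ * |t| ^ σ
      ≤ Real.exp (γ.re * t) * C * |t| ^ σ := by
        apply mul_le_mul_of_nonneg_right _ (zpow_nonneg (abs_nonneg t) σ)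
        exact mul_le_mul_of_nonneg_left ht (Real.exp_nonneg _)
    _ = C * (Real.exp (γ.re * t) * |t| ^ σ) := by ring

private lemma good_tendsto {δ : ℝ} (hδ : 0 < δ) {f : ℝ → ℂ} (hf : Good' δ f) :
    Tendsto f atBot (nhds 0) := by
  induction hf with
  | term γ g σ hg hγ => exact term_tendsto hδ hg hγ
  | add h₁ h₂ ih₁ ih₂ => simpa using ih₁.add ih₂

private lemma good_deriv {δ : ℝ} (hδ : 0 < δ) {f : ℝ → ℂ} (hf : Good' δ f) :
    ∃ f', Good' δ f' ∧ ∀ t ∈ Set.Iio (min (Real.log δ) 0), HasDerivAt f (f' t) t := by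
  induction hf with
  | add h₁ h₂ ih₁ ih₂ =>
    obtain ⟨f₁', hf₁', hd₁⟩ := ih₁
    obtain ⟨f₂', hf₂', hd₂⟩ := ih₂
    exact ⟨fun t => f₁' t + f₂' t, Good'.add hf₁' hf₂',
      fun t ht => (hd₁ t ht).add (hd₂ t ht)⟩
  | term γ g σ hg hγ =>
    have hre : 0 < (γ + 1).re := by
      rcases hγ with h | ⟨h, _⟩ <;> simp [Complex.add_re] <;> linarith
    have hg' : DifferentiableOn ℂ (deriv g) (Metric.ball (0 : ℂ) δ) :=
      ((hg.analyticOnNhd Metric.isOpen_ball).deriv).differentiableOn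
    refine ⟨fun t => Term' γ (fun z => γ * g z) σ t +
        (Term' (γ + 1) (deriv g) σ t + Term' γ (fun z => (σ : ℂ) * g z) (σ - 1) t),
      ?_, ?_⟩
    · refine Good'.add (Good'.term _ _ _ (by exact (differentiable_const γ).differentiableOn.mul hg) hγ)
        (Good'.add (Good'.term _ _ _ hg' (Or.inl hre))
          (Good'.term _ _ _ ((differentiable_const (σ:ℂ)).differentiableOn.mul hg) ?_))
      rcases hγ with h | ⟨h, hσ⟩
      · exact Or.inl h
      · exact Or.inr ⟨h, by omega⟩
    · intro t ht
      simp only [Set.mem_Iio, lt_min_iff] at ht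
      obtain ⟨htδ, ht0⟩ := ht
      have hmem : Complex.exp (t : ℂ) ∈ Metric.ball (0 : ℂ) δ := by
        rw [← Complex.ofReal_exp]
        simp only [Metric.mem_ball, dist_zero_right, Complex.norm_real,
          Real.norm_eq_abs, abs_of_pos (Real.exp_pos t)]
        exact (Real.exp_lt_exp.mpr htδ).trans_le (Real.exp_log hδ).le
      -- derivative of exp(γ z)
      have hA : HasDerivAt (fun s : ℝ => Complex.exp (γ * (s : ℂ)))
          (γ * Complex.exp (γ * (t : ℂ))) t := by
        have h0 : HasDerivAt (fun s : ℝ => ((s : ℂ))) 1 t := by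
          simpa using (hasDerivAt_id t).ofReal_comp
        have h1 : HasDerivAt (fun s : ℝ => γ * (s : ℂ)) (γ * 1) t := h0.const_mul γ
        have h2 := h1.cexp
        simpa [mul_comm] using h2
      -- derivative of g(e^t)
      have hgd : HasDerivAt g (deriv g (Complex.exp (t : ℂ))) (Complex.exp (t : ℂ)) :=
        ((hg.differentiableAt (Metric.isOpen_ball.mem_nhds hmem)).hasDerivAt)
      have hB : HasDerivAt (fun s : ℝ => g ((Real.exp s : ℂ)))
          (deriv g (Complex.exp (t : ℂ)) * Complex.exp (t : ℂ)) t := by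
        have h1 : HasDerivAt (fun z : ℂ => g (Complex.exp z))
            (deriv g (Complex.exp (t : ℂ)) * Complex.exp (t : ℂ)) (t : ℂ) :=
          hgd.comp _ (Complex.hasDerivAt_exp _)
        have h2 := h1.comp_ofReal
        refine h2.congr_of_eventuallyEq (Filter.Eventually.of_forall fun s => ?_)
        show g ((Real.exp s : ℝ) : ℂ) = g (Complex.exp (s : ℂ))
        rw [Complex.ofReal_exp]
      -- derivative of t^σ
      have hC : HasDerivAt (fun s : ℝ => ((s : ℂ)) ^ σ)
          ((σ : ℂ) * (t : ℂ) ^ (σ - 1)) t := by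
        have h1 : HasDerivAt (fun z : ℂ => z ^ σ) ((σ : ℂ) * (t : ℂ) ^ (σ - 1)) (t : ℂ) :=
          hasDerivAt_zpow σ _ (Or.inl (by exact_mod_cast ne_of_lt ht0))
        exact h1.comp_ofReal
      have hD := ((hA.mul hB).mul hC)
      refine hD.congr_deriv ?_
      have hexpt : ((Real.exp t : ℝ) : ℂ) = Complex.exp (t : ℂ) := Complex.ofReal_exp t
      have hsplit : Complex.exp ((γ + 1) * (t : ℂ)) =
          Complex.exp (γ * (t : ℂ)) * Complex.exp (t : ℂ) := by
        rw [← Complex.exp_add]; ring_nf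
      simp only [Term', hexpt, hsplit, Pi.mul_apply]
      ring

/-- All iterated derivatives of `t ↦ e^{γt} · h(eᵗ) · tᶳ` tend to `0` as
`t → −∞`, provided `h` is holomorphic on the disc `D_δ` and either
`Re γ > 0`, or `Re γ = 0` and `σ ≤ -1`. -/
theorem iteratedDeriv_tendsto_zero_atBot
    (δ : ℝ) (hδ : 0 < δ) (h : ℂ → ℂ)
    (hh : DifferentiableOn ℂ h (Metric.ball (0 : ℂ) δ))
    (γ : ℂ) (σ : ℤ)
    (hγ : 0 < γ.re ∨ (γ.re = 0 ∧ σ ≤ -1)) :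
    ∀ j : ℕ, Filter.Tendsto
      (fun t : ℝ => iteratedDeriv j
        (fun t : ℝ => Complex.exp (γ * (t : ℂ)) * h ((Real.exp t : ℂ)) * (t : ℂ) ^ σ) t)
      Filter.atBot (nhds 0) := by
  set F : ℝ → ℂ :=
    fun t : ℝ => Complex.exp (γ * (t : ℂ)) * h ((Real.exp t : ℂ)) * (t : ℂ) ^ σ with hF
  set U : Set ℝ := Set.Iio (min (Real.log δ) 0) with hU
  have hUopen : IsOpen U := isOpen_Iio
  have key : ∀ j : ℕ, ∃ g, Good' δ g ∧ Set.EqOn (iteratedDeriv j F) g U := by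
    intro j
    induction j with
    | zero =>
      exact ⟨Term' γ h σ, Good'.term _ _ _ hh hγ, fun t _ => by
        simp [iteratedDeriv_zero, hF, Term']⟩
    | succ n ih =>
      obtain ⟨g, hg, heq⟩ := ih
      obtain ⟨g', hg', hd⟩ := good_deriv hδ hg
      refine ⟨g', hg', fun t ht => ?_⟩
      rw [iteratedDeriv_succ]
      have hnhds : iteratedDeriv n F =ᶠ[nhds t] g :=
        Filter.eventuallyEq_of_mem (hUopen.mem_nhds ht) heq
      rw [hnhds.deriv_eq]
      exact (hd t ht).deriv
  intro j
  obtain ⟨g, hg, heq⟩ := key j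
  refine (good_tendsto hδ hg).congr' ?_
  filter_upwards [Iio_mem_atBot (min (Real.log δ) 0)] with t ht
  exact (heq ht).symm
end
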